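/- Let G be a finite group and let G̃ = {(g,h) ∈ G × G : gh = hg} be the set of commuting pairs, with G acting by simultaneous conjugation. Let C_G(G̃) denote the ℂ-valued G-invariant functions on G̃. Define (f₁ *₂ f₂)(g, h) = Σ_{h₁h₂ = h, h₁,h₂ ∈ Z_G(g)} f₁(g, h₁) f₂(g, h₂), where Z_G(g) is the centralizer of g. Then *₂ makes C_G(G̃) an associative, commutative, unital ℂ-algebra, with unit the function (g,h) ↦ 1 if h = e and 0 otherwise. -/

import Mathlib

/-- The set `G̃` of commuting pairs in `G × G`. -/
abbrev CommPairs (G : Type*) [Group G] : Type _ :=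
  {p : G × G // p.1 * p.2 = p.2 * p.1}

/-- `G`-invariance (under simultaneous conjugation) of a function on `G̃`. -/
def GConjInv {G : Type*} [Group G] (f : CommPairs G → ℂ) : Prop :=
  ∀ (k : G) (p q : CommPairs G),
    q.val = (k * p.val.1 * k⁻¹, k * p.val.2 * k⁻¹) → f q = f p

/-- The stringy convolution `(f₁ *₂ f₂)(g,h) = Σ_{h₁h₂=h, h₁,h₂ ∈ Z_G(g)} f₁(g,h₁)f₂(g,h₂)`. -/
noncomputable def convTwo {G : Type*} [Group G] [Fintype G] [DecidableEq G]
    (f₁ f₂ : CommPairs G → ℂ) (p : CommPairs G) : ℂ :=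
  ∑ q : G × G,
    if hq : q.1 * q.2 = p.val.2 ∧ p.val.1 * q.1 = q.1 * p.val.1 ∧
        p.val.1 * q.2 = q.2 * p.val.1
    then f₁ ⟨(p.val.1, q.1), hq.2.1⟩ * f₂ ⟨(p.val.1, q.2), hq.2.2⟩ else 0

/-- The unit `(g,h) ↦ 1` if `h = e`, else `0`. -/
noncomputable def unitTwo {G : Type*} [Group G] [DecidableEq G] : CommPairs G → ℂ :=
  fun p => if p.val.2 = 1 then 1 else 0

/-! Restricting `f : G̃ → ℂ` to the fibre `{g} × Z_G(g)` and extending by zero gives an element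
`slice f g` of the group algebra `ℂ[G]`, and `slice (f₁ *₂ f₂) g = slice f₁ g * slice f₂ g`:
the centralizer conditions in `*₂` are automatic because slices vanish off `Z_G(g)`, which is
closed under products. Since `f` is recovered from its slices, associativity, the unit and
bilinearity are inherited from `ℂ[G]`.

Invariance enters only through `(slice f (k g k⁻¹)).coeff (k x k⁻¹) = (slice f g).coeff x`.
With `k = a ∈ Z_G(g)` it turns `∑ a, f₁(a) f₂(a⁻¹ x)` into `∑ a, f₂(x a⁻¹) f₁(a)` term by term,
which is commutativity; for arbitrary `k` the substitution `a ↦ k a k⁻¹` shows that `*₂`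
preserves invariance. -/

open scoped MonoidAlgebra

namespace MonoidAlgebra

variable {R G : Type*} [Semiring R] [Group G] [Fintype G]

theorem coeff_mul_eq_sum_inv_mul (x y : R[G]) (g : G) :
    (x * y).coeff g = ∑ h, x.coeff h * y.coeff (h⁻¹ * g) := by
  rw [coeff_mul_apply_left, Finsupp.sum_fintype _ _ fun _ => zero_mul _]

theorem coeff_mul_eq_sum_mul_inv (x y : R[G]) (g : G) :
    (x * y).coeff g = ∑ h, x.coeff (g * h⁻¹) * y.coeff h := by
  rw [coeff_mul_apply_right, Finsupp.sum_fintype _ _ fun _ => mul_zero _]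

end MonoidAlgebra

namespace CommPairs

variable {G : Type*} [Group G] [DecidableEq G]

theorem gConjInv_unitTwo : GConjInv (unitTwo (G := G)) := by
  intro k p q hq
  simp [unitTwo, hq]

variable [Fintype G]

noncomputable def slice (f : CommPairs G → ℂ) (g : G) : ℂ[G] :=
  .ofCoeff <| Finsupp.equivFunOnFinite.symm fun x =>
    if h : g * x = x * g then f ⟨(g, x), h⟩ else 0

theorem coeff_slice (f : CommPairs G → ℂ) (g x : G) :
    (slice f g).coeff x = if h : g * x = x * g then f ⟨(g, x), h⟩ else 0 :=
  rfl

theorem coeff_slice_of_not_commute (f : CommPairs G → ℂ) {g x : G} (h : ¬g * x = x * g) :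
    (slice f g).coeff x = 0 :=
  dif_neg h

theorem coeff_slice_val (f : CommPairs G → ℂ) (p : CommPairs G) :
    (slice f p.val.1).coeff p.val.2 = f p :=
  dif_pos p.prop

theorem ext_slice {f₁ f₂ : CommPairs G → ℂ} (h : ∀ g, slice f₁ g = slice f₂ g) : f₁ = f₂ := by
  funext p
  rw [← coeff_slice_val f₁, ← coeff_slice_val f₂, h]

theorem slice_add (f₁ f₂ : CommPairs G → ℂ) (g : G) :
    slice (f₁ + f₂) g = slice f₁ g + slice f₂ g := by
  ext x
  by_cases h : g * x = x * g <;> simp [coeff_slice, h]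

theorem slice_smul (a : ℂ) (f : CommPairs G → ℂ) (g : G) : slice (a • f) g = a • slice f g := by
  ext x
  by_cases h : g * x = x * g <;> simp [coeff_slice, h]

theorem slice_unitTwo (g : G) : slice unitTwo g = 1 := by
  ext x
  by_cases h : x = 1 <;> simp [coeff_slice, MonoidAlgebra.one_def, unitTwo, h]

theorem gConjInv_iff_coeff_slice (f : CommPairs G → ℂ) :
    GConjInv f ↔ ∀ k g x, (slice f (k * g * k⁻¹)).coeff (k * x * k⁻¹) = (slice f g).coeff x := by
  constructor
  · intro hf k g x
    by_cases h : g * x = x * g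
    · have hk : (k * g * k⁻¹) * (k * x * k⁻¹) = (k * x * k⁻¹) * (k * g * k⁻¹) :=
        (Commute.conj_iff k).mpr h
      rw [coeff_slice, coeff_slice, dif_pos h, dif_pos hk]
      exact hf k ⟨(g, x), h⟩ _ rfl
    · have hk : ¬(k * g * k⁻¹) * (k * x * k⁻¹) = (k * x * k⁻¹) * (k * g * k⁻¹) :=
        mt (Commute.conj_iff k).mp h
      rw [coeff_slice_of_not_commute f h, coeff_slice_of_not_commute f hk]
  · intro hf k p q hq
    rw [← coeff_slice_val f p, ← coeff_slice_val f q, hq]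
    exact hf k _ _

theorem _root_.GConjInv.coeff_slice_conj {f : CommPairs G → ℂ} (hf : GConjInv f) (k g x : G) :
    (slice f (k * g * k⁻¹)).coeff (k * x * k⁻¹) = (slice f g).coeff x :=
  (gConjInv_iff_coeff_slice f).mp hf k g x

theorem coeff_slice_mul_slice (f₁ f₂ : CommPairs G → ℂ) (g x : G) :
    (slice f₁ g * slice f₂ g).coeff x = ∑ q : G × G,
      if hq : q.1 * q.2 = x ∧ g * q.1 = q.1 * g ∧ g * q.2 = q.2 * g
      then f₁ ⟨(g, q.1), hq.2.1⟩ * f₂ ⟨(g, q.2), hq.2.2⟩ else 0 := by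
  rw [MonoidAlgebra.coeff_mul_antidiag _ _ x (Finset.univ.filter fun q => q.1 * q.2 = x)
    (by simp), Finset.sum_filter]
  refine Finset.sum_congr rfl fun q _ => ?_
  by_cases h : q.1 * q.2 = x <;> by_cases h₁ : g * q.1 = q.1 * g <;>
    by_cases h₂ : g * q.2 = q.2 * g <;> simp [coeff_slice, h, h₁, h₂]

theorem slice_convTwo (f₁ f₂ : CommPairs G → ℂ) (g : G) :
    slice (convTwo f₁ f₂) g = slice f₁ g * slice f₂ g := by
  ext x
  rw [coeff_slice_mul_slice, coeff_slice]
  split_ifs with hx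
  · rfl
  · refine (Finset.sum_eq_zero fun q _ => dif_neg ?_).symm
    rintro ⟨rfl, h₁, h₂⟩
    exact hx (Commute.mul_right h₁ h₂)

theorem gConjInv_convTwo {f₁ f₂ : CommPairs G → ℂ} (hf₁ : GConjInv f₁) (hf₂ : GConjInv f₂) :
    GConjInv (convTwo f₁ f₂) := by
  refine (gConjInv_iff_coeff_slice _).mpr fun k g x => ?_
  simp only [slice_convTwo, MonoidAlgebra.coeff_mul_eq_sum_inv_mul]
  refine (Fintype.sum_equiv (MulAut.conj k).toEquiv _ _ fun a => ?_).symm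
  rw [MulEquiv.toEquiv_eq_coe, MulEquiv.coe_toEquiv, MulAut.conj_apply,
    show (k * a * k⁻¹)⁻¹ * (k * x * k⁻¹) = k * (a⁻¹ * x) * k⁻¹ by group,
    hf₁.coeff_slice_conj, hf₂.coeff_slice_conj]

theorem slice_mul_comm (f₁ : CommPairs G → ℂ) {f₂ : CommPairs G → ℂ} (hf₂ : GConjInv f₂)
    (g : G) :
    slice f₁ g * slice f₂ g = slice f₂ g * slice f₁ g := by
  ext x
  rw [MonoidAlgebra.coeff_mul_eq_sum_inv_mul, MonoidAlgebra.coeff_mul_eq_sum_mul_inv]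
  refine Finset.sum_congr rfl fun a _ => ?_
  by_cases ha : g * a = a * g
  · have h := hf₂.coeff_slice_conj a g (a⁻¹ * x)
    rw [← ha, mul_inv_cancel_right, show a * (a⁻¹ * x) * a⁻¹ = x * a⁻¹ by group] at h
    rw [← h, mul_comm]
  · rw [coeff_slice_of_not_commute f₁ ha, zero_mul, mul_zero]

theorem convTwo_assoc (f₁ f₂ f₃ : CommPairs G → ℂ) :
    convTwo (convTwo f₁ f₂) f₃ = convTwo f₁ (convTwo f₂ f₃) :=
  ext_slice fun g => by simp only [slice_convTwo, mul_assoc]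

theorem convTwo_comm (f₁ : CommPairs G → ℂ) {f₂ : CommPairs G → ℂ} (hf₂ : GConjInv f₂) :
    convTwo f₁ f₂ = convTwo f₂ f₁ :=
  ext_slice fun g => by simp only [slice_convTwo, slice_mul_comm f₁ hf₂]

theorem unitTwo_convTwo (f : CommPairs G → ℂ) : convTwo unitTwo f = f :=
  ext_slice fun g => by rw [slice_convTwo, slice_unitTwo, one_mul]

theorem convTwo_unitTwo (f : CommPairs G → ℂ) : convTwo f unitTwo = f :=
  ext_slice fun g => by rw [slice_convTwo, slice_unitTwo, mul_one]

theorem smul_convTwo (a : ℂ) (f₁ f₂ : CommPairs G → ℂ) :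
    convTwo (a • f₁) f₂ = a • convTwo f₁ f₂ :=
  ext_slice fun g => by simp only [slice_convTwo, slice_smul, smul_mul_assoc]

theorem convTwo_smul (a : ℂ) (f₁ f₂ : CommPairs G → ℂ) :
    convTwo f₁ (a • f₂) = a • convTwo f₁ f₂ :=
  ext_slice fun g => by simp only [slice_convTwo, slice_smul, mul_smul_comm]

theorem add_convTwo (f₁ f₂ f₃ : CommPairs G → ℂ) :
    convTwo (f₁ + f₂) f₃ = convTwo f₁ f₃ + convTwo f₂ f₃ :=
  ext_slice fun g => by simp only [slice_convTwo, slice_add, add_mul]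

theorem convTwo_add (f₁ f₂ f₃ : CommPairs G → ℂ) :
    convTwo f₁ (f₂ + f₃) = convTwo f₁ f₂ + convTwo f₁ f₃ :=
  ext_slice fun g => by simp only [slice_convTwo, slice_add, mul_add]

end CommPairs

/-- The product `*₂` makes the `G`-invariant functions on `G̃` an associative,
commutative, unital `ℂ`-algebra, with unit `(g,h) ↦ 1` if `h = e` and `0` otherwise. -/
theorem stmt_9 (G : Type*) [Group G] [Fintype G] [DecidableEq G] :
    (∀ f₁ f₂ : CommPairs G → ℂ, GConjInv f₁ → GConjInv f₂ → GConjInv (convTwo f₁ f₂)) ∧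
    (∀ f₁ f₂ f₃ : CommPairs G → ℂ, convTwo (convTwo f₁ f₂) f₃ = convTwo f₁ (convTwo f₂ f₃)) ∧
    (∀ f₁ f₂ : CommPairs G → ℂ, GConjInv f₁ → GConjInv f₂ → convTwo f₁ f₂ = convTwo f₂ f₁) ∧
    GConjInv (unitTwo (G := G)) ∧
    (∀ f : CommPairs G → ℂ, convTwo unitTwo f = f ∧ convTwo f unitTwo = f) ∧
    (∀ (a : ℂ) (f₁ f₂ : CommPairs G → ℂ),
      convTwo (a • f₁) f₂ = a • convTwo f₁ f₂ ∧ convTwo f₁ (a • f₂) = a • convTwo f₁ f₂) ∧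
    (∀ f₁ f₂ f₃ : CommPairs G → ℂ,
      convTwo (f₁ + f₂) f₃ = convTwo f₁ f₃ + convTwo f₂ f₃ ∧
      convTwo f₁ (f₂ + f₃) = convTwo f₁ f₂ + convTwo f₁ f₃) :=
  ⟨fun _ _ => CommPairs.gConjInv_convTwo, CommPairs.convTwo_assoc,
    fun f₁ _ _ hf₂ => CommPairs.convTwo_comm f₁ hf₂, CommPairs.gConjInv_unitTwo,
    fun f => ⟨CommPairs.unitTwo_convTwo f, CommPairs.convTwo_unitTwo f⟩,
    fun a f₁ f₂ => ⟨CommPairs.smul_convTwo a f₁ f₂, CommPairs.convTwo_smul a f₁ f₂⟩,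
    fun f₁ f₂ f₃ => ⟨CommPairs.add_convTwo f₁ f₂ f₃, CommPairs.convTwo_add f₁ f₂ f₃⟩⟩
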